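/- (Finite-dimensional Combes–Thomas type estimate) Let H be an n×n Hermitian matrix with |H_{ij}| ≤ C e^{−μ|i−j|} for all i,j and some C, μ > 0 (exponentially decaying off-diagonal entries), and let λ ∈ ℂ with dist(λ, spec(H)) = δ > 0. Then there exist constants C' and ν > 0, depending only on C, μ, δ (not on n), such that |((λ − H)⁻¹)_{ij}| ≤ C' e^{−ν |i−j|} for all i, j. -/
import Mathlib

open scoped Matrix.Norms.L2Operator

noncomputable instance matCStarCT (n : ℕ) : CStarAlgebra (Matrix (Fin n) (Fin n) ℂ) := {}

/-- entries are bounded by the L2 operator norm -/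
lemma CT.euclid_coord_le {n : ℕ} (y : EuclideanSpace ℂ (Fin n)) (i : Fin n) : ‖y i‖ ≤ ‖y‖ := by
  rw [EuclideanSpace.norm_eq]
  have h : ‖y i‖ = Real.sqrt (‖y i‖ ^ 2) := (Real.sqrt_sq (norm_nonneg _)).symm
  rw [h]
  apply Real.sqrt_le_sqrt
  exact Finset.single_le_sum (f := fun j => ‖y j‖ ^ 2) (fun j _ => by positivity)
    (Finset.mem_univ i)

lemma CT.entry_le_norm {n : ℕ} (A : Matrix (Fin n) (Fin n) ℂ) (i j : Fin n) :
    ‖A i j‖ ≤ ‖A‖ := by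
  have h := A.l2_opNorm_mulVec (EuclideanSpace.single j 1)
  rw [EuclideanSpace.norm_single, norm_one, mul_one] at h
  refine le_trans ?_ h
  have h2 : A i j = ((EuclideanSpace.equiv (Fin n) ℂ).symm <| A.mulVec
      (EuclideanSpace.single j 1)) i := by
    simp [Matrix.mulVec, dotProduct, EuclideanSpace.single_apply]
  rw [h2]
  exact CT.euclid_coord_le _ i

/-- Schur test for the L2 operator norm -/
lemma CT.schur_test {n : ℕ} (A : Matrix (Fin n) (Fin n) ℂ) (r : ℝ) (hr : 0 ≤ r)
    (hrow : ∀ i, ∑ j, ‖A i j‖ ≤ r) (hcol : ∀ j, ∑ i, ‖A i j‖ ≤ r) : ‖A‖ ≤ r := by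
  rw [Matrix.l2_opNorm_def]
  refine ContinuousLinearMap.opNorm_le_bound _ hr fun x => ?_
  have key : ∀ y : EuclideanSpace ℂ (Fin n),
      (∀ i, y i = ∑ j, A i j * x j) → ‖y‖ ≤ r * ‖x‖ := by
    intro y hy
    have h1 : ‖y‖ ^ 2 ≤ (r * ‖x‖) ^ 2 := by
      rw [EuclideanSpace.norm_eq, Real.sq_sqrt (by positivity)]
      have hyi : ∀ i, ‖y i‖ ^ 2 ≤ (∑ j, ‖A i j‖) * (∑ j, ‖A i j‖ * ‖x j‖ ^ 2) := by
        intro i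
        have h2 : ‖y i‖ ≤ ∑ j, ‖A i j‖ * ‖x j‖ := by
          rw [hy i]
          exact (norm_sum_le _ _).trans (le_of_eq (by simp [norm_mul]))
        refine le_trans (pow_le_pow_left₀ (norm_nonneg _) h2 2) <|
          Finset.sum_sq_le_sum_mul_sum_of_sq_eq_mul Finset.univ
            (f := fun j => ‖A i j‖) (g := fun j => ‖A i j‖ * ‖x j‖ ^ 2)
            (fun j _ => norm_nonneg _) (fun j _ => by positivity) (fun j _ => by ring)
      calc ∑ i, ‖y i‖ ^ 2 ≤ ∑ i, (∑ j, ‖A i j‖) * (∑ j, ‖A i j‖ * ‖x j‖ ^ 2) :=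
            Finset.sum_le_sum fun i _ => hyi i
        _ ≤ ∑ i, r * (∑ j, ‖A i j‖ * ‖x j‖ ^ 2) :=
            Finset.sum_le_sum fun i _ => by
              have hnn : (0:ℝ) ≤ ∑ j, ‖A i j‖ * ‖x j‖ ^ 2 :=
                Finset.sum_nonneg fun j _ => by positivity
              exact mul_le_mul_of_nonneg_right (hrow i) hnn
        _ = r * ∑ j, (∑ i, ‖A i j‖) * ‖x j‖ ^ 2 := by
            rw [← Finset.mul_sum, Finset.sum_comm]
            simp_rw [Finset.sum_mul]
        _ ≤ r * ∑ j, r * ‖x j‖ ^ 2 := by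
            refine mul_le_mul_of_nonneg_left (Finset.sum_le_sum fun j _ => ?_) hr
            exact mul_le_mul_of_nonneg_right (hcol j) (by positivity)
        _ = (r * ‖x‖) ^ 2 := by
            rw [← Finset.mul_sum, EuclideanSpace.norm_eq, mul_pow,
              Real.sq_sqrt (by positivity)]
            ring
    exact (pow_le_pow_iff_left₀ (norm_nonneg y) (by positivity) two_ne_zero).mp h1
  exact key _ fun i => rfl

/-- the resolvent of a Hermitian matrix, at distance `δ` from the spectrum, has norm `≤ δ⁻¹`. -/
lemma CT.resolvent_norm_bound {n : ℕ} {H : Matrix (Fin n) (Fin n) ℂ} (hH : H.IsHermitian)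
    {lam : ℂ} {δ : ℝ} (hδ : 0 < δ) (hspec : ∀ z ∈ spectrum ℂ H, δ ≤ dist lam z)
    (u : (Matrix (Fin n) (Fin n) ℂ)ˣ) (hu : (u : Matrix (Fin n) (Fin n) ℂ) = lam • 1 - H) :
    ‖(↑u⁻¹ : Matrix (Fin n) (Fin n) ℂ)‖ ≤ δ⁻¹ := by
  have hsmul : (lam • (1 : Matrix (Fin n) (Fin n) ℂ)) = algebraMap ℂ _ lam :=
    (Algebra.algebraMap_eq_smul_one lam).symm
  have expand : ∀ c d : ℂ, ((c • 1 - H) : Matrix (Fin n) (Fin n) ℂ) * (d • 1 - H) =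
      (c*d) • 1 - c • H - d • H + H * H := by
    intro c d
    simp only [sub_mul, mul_sub, smul_mul_assoc, Matrix.mul_smul, Matrix.smul_mul,
      one_mul, mul_one, smul_smul]
    abel
  have hstar : star ((lam • 1 - H) : Matrix (Fin n) (Fin n) ℂ) =
      (starRingEnd ℂ lam) • 1 - H := by
    rw [star_sub, star_smul, star_one, Matrix.star_eq_conjTranspose, hH]
    rfl
  have hnormal : IsStarNormal (u : Matrix (Fin n) (Fin n) ℂ) := by
    constructor
    rw [hu, hstar, Commute, SemiconjBy, expand, expand, mul_comm lam]
    abel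
  have hc : Commute (star (↑u : Matrix (Fin n) (Fin n) ℂ)) ↑u := hnormal.star_comm_self
  rw [← Units.coe_star] at hc
  have hcinv := (hc.units_inv_left).units_inv_right
  rw [Units.coe_star_inv] at hcinv
  have hinv : IsStarNormal ((↑u⁻¹ : Matrix (Fin n) (Fin n) ℂ)) := ⟨hcinv⟩
  have hrad := hinv.spectralRadius_eq_nnnorm ((↑u⁻¹ : Matrix (Fin n) (Fin n) ℂ))
  have hbound : spectralRadius ℂ (↑u⁻¹ : Matrix (Fin n) (Fin n) ℂ) ≤ (δ⁻¹.toNNReal : ENNReal) := by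
    refine iSup₂_le fun k hk => ?_
    have hkne : k ≠ 0 := spectrum.ne_zero_of_mem_of_unit hk
    rw [← spectrum.map_inv, Set.mem_inv] at hk
    rw [hu, hsmul, ← spectrum.singleton_sub_eq] at hk
    obtain ⟨l, hl, z, hz, hlz⟩ := hk
    rw [Set.mem_singleton_iff] at hl
    subst hl
    have hdist : δ ≤ ‖k⁻¹‖ := by
      rw [← hlz]
      simpa [dist_eq_norm] using hspec z hz
    have hnorm : ‖k‖ ≤ δ⁻¹ := by
      rw [← inv_inv k, norm_inv]
      exact inv_anti₀ hδ hdist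
    have h5 : ‖k‖₊ ≤ δ⁻¹.toNNReal := by
      rw [← NNReal.coe_le_coe, coe_nnnorm, Real.coe_toNNReal _ (le_of_lt (inv_pos.mpr hδ))]
      exact hnorm
    exact_mod_cast h5
  rw [hrad] at hbound
  have h2 : ‖(↑u⁻¹ : Matrix (Fin n) (Fin n) ℂ)‖₊ ≤ δ⁻¹.toNNReal := by exact_mod_cast hbound
  calc ‖(↑u⁻¹ : Matrix (Fin n) (Fin n) ℂ)‖ = (‖(↑u⁻¹ : Matrix (Fin n) (Fin n) ℂ)‖₊ : ℝ) := rfl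
    _ ≤ (δ⁻¹.toNNReal : ℝ) := by exact_mod_cast h2
    _ = δ⁻¹ := Real.coe_toNNReal _ (le_of_lt (inv_pos.mpr hδ))

/-- Neumann-series style perturbation of an invertible element. -/
lemma CT.perturb_gen {R : Type*} [NormedRing R] [CompleteSpace R] (hone : ‖(1:R)‖ ≤ 1)
    (u : Rˣ) {δ : ℝ} (hδ : 0 < δ) (hu : ‖((u⁻¹ : Rˣ) : R)‖ ≤ δ⁻¹) (b : R)
    (hb : ‖b‖ ≤ δ/4) :
    ∃ w : Rˣ, (w : R) = (u : R) - b ∧ ‖((w⁻¹ : Rˣ) : R)‖ ≤ 2/δ := by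
  have htn : ‖((u⁻¹ : Rˣ) : R) * b‖ ≤ 1/4 := by
    calc ‖((u⁻¹ : Rˣ) : R) * b‖ ≤ ‖((u⁻¹ : Rˣ) : R)‖ * ‖b‖ := norm_mul_le _ _
      _ ≤ δ⁻¹ * (δ/4) := mul_le_mul hu hb (norm_nonneg _) (le_of_lt (inv_pos.mpr hδ))
      _ = 1/4 := by field_simp
  have htlt : ‖((u⁻¹ : Rˣ) : R) * b‖ < 1 := lt_of_le_of_lt htn (by norm_num)
  set t : R := ((u⁻¹ : Rˣ) : R) * b with ht
  let v : Rˣ := Units.oneSub t htlt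
  have hvcoe : (v : R) = 1 - t := Units.val_oneSub _ _
  set w : R := ((v⁻¹ : Rˣ) : R) with hw
  have h1 : (v : R) * w = 1 := v.mul_inv
  have h2 : 1 + t * w = w := by
    rw [hvcoe, sub_mul, one_mul, sub_eq_iff_eq_add] at h1
    exact h1.symm
  have hx : (0:ℝ) ≤ ‖w‖ := norm_nonneg w
  have h3 : ‖w‖ ≤ 1 + ‖t‖ * ‖w‖ := by
    calc ‖w‖ = ‖1 + t * w‖ := by rw [h2]
      _ ≤ ‖(1 : R)‖ + ‖t * w‖ := norm_add_le _ _
      _ ≤ 1 + ‖t‖ * ‖w‖ := add_le_add hone (norm_mul_le _ _)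
  have h4 : ‖t‖ * ‖w‖ ≤ (1/4) * ‖w‖ := mul_le_mul_of_nonneg_right htn hx
  have hvinv : ‖w‖ ≤ 4/3 := by linarith
  refine ⟨u * v, ?_, ?_⟩
  · rw [Units.val_mul, hvcoe, mul_sub, mul_one, ht, ← mul_assoc, u.mul_inv, one_mul]
  · rw [mul_inv_rev, Units.val_mul]
    calc ‖((v⁻¹ : Rˣ) : R) * ((u⁻¹ : Rˣ) : R)‖
        ≤ ‖w‖ * ‖((u⁻¹ : Rˣ) : R)‖ := norm_mul_le _ _
      _ ≤ (4/3) * δ⁻¹ := mul_le_mul hvinv hu (norm_nonneg _) (by norm_num)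
      _ ≤ 2/δ := by
          rw [div_eq_mul_inv 2]
          exact mul_le_mul_of_nonneg_right (by norm_num) (le_of_lt (inv_pos.mpr hδ))

lemma CT.mat_norm_one_le (n : ℕ) : ‖(1 : Matrix (Fin n) (Fin n) ℂ)‖ ≤ 1 := by
  rw [Matrix.cstar_norm_def, map_one]
  exact ContinuousLinearMap.norm_id_le

lemma CT.tsum_aux {q : ℝ} (h0 : 0 ≤ q) (h1 : q < 1) :
    ∑' d : ℕ, ((d : ℝ) + 1) * q ^ d = (1 - q)⁻¹ ^ 2 := by
  have hs1 : Summable (fun d : ℕ => (d : ℝ) * q ^ d) := by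
    have := summable_pow_mul_geometric_of_norm_lt_one (R := ℝ) 1 (by
      rwa [Real.norm_eq_abs, abs_of_nonneg h0])
    simpa using this
  have hs2 : Summable (fun d : ℕ => q ^ d) := summable_geometric_of_lt_one h0 h1
  have heq : ∑' d : ℕ, ((d : ℝ) + 1) * q ^ d
      = (∑' d : ℕ, (d : ℝ) * q ^ d) + ∑' d : ℕ, q ^ d := by
    rw [← Summable.tsum_add hs1 hs2]
    congr 1; funext d; ring
  rw [heq, tsum_coe_mul_geometric_of_norm_lt_one (by rwa [Real.norm_eq_abs, abs_of_nonneg h0]),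
    tsum_geometric_of_lt_one h0 h1]
  have hne : 1 - q ≠ 0 := by linarith
  field_simp
  ring

lemma CT.row_sum_bound {n : ℕ} (i : Fin n) {q : ℝ} (h0 : 0 ≤ q) (h1 : q < 1) :
    ∑ j : Fin n, ((((i:ℤ) - (j:ℤ)).natAbs : ℝ) + 1) * q ^ ((i:ℤ) - (j:ℤ)).natAbs ≤
      2 * (1 - q)⁻¹ ^ 2 := by
  set f : ℕ → ℝ := fun d => ((d : ℝ) + 1) * q ^ d with hf
  have hfnn : ∀ d, 0 ≤ f d := fun d => by positivity
  have hsum : Summable f := by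
    have hs1 : Summable (fun d : ℕ => (d : ℝ) * q ^ d) := by
      have := summable_pow_mul_geometric_of_norm_lt_one (R := ℝ) 1 (by
        rwa [Real.norm_eq_abs, abs_of_nonneg h0])
      simpa using this
    have hs2 : Summable (fun d : ℕ => q ^ d) := summable_geometric_of_lt_one h0 h1
    simpa [hf, add_mul] using hs1.add hs2
  have hT : ∑' d, f d ≤ (1 - q)⁻¹ ^ 2 := le_of_eq (CT.tsum_aux h0 h1)
  have key : ∀ s : Finset (Fin n),
      (∀ j1 ∈ s, ∀ j2 ∈ s, ((i:ℤ) - (j1:ℤ)).natAbs = ((i:ℤ) - (j2:ℤ)).natAbs → j1 = j2) →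
      ∑ j ∈ s, f ((i:ℤ) - (j:ℤ)).natAbs ≤ (1 - q)⁻¹ ^ 2 := by
    intro s hinj
    rw [← Finset.sum_image hinj]
    exact le_trans (Summable.sum_le_tsum _ (fun d _ => hfnn d) hsum) hT
  have hsplit := Finset.sum_filter_add_sum_filter_not Finset.univ
    (fun j : Fin n => (j : ℕ) ≤ (i : ℕ)) (fun j => f ((i:ℤ) - (j:ℤ)).natAbs)
  have h2 : (2 : ℝ) * (1 - q)⁻¹ ^ 2 = (1 - q)⁻¹ ^ 2 + (1 - q)⁻¹ ^ 2 := by ring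
  rw [← hsplit, h2]
  refine add_le_add (key _ ?_) (key _ ?_) <;>
  · intro j1 hj1 j2 hj2 heq
    simp only [Finset.mem_filter, Finset.mem_univ, true_and, not_le] at hj1 hj2
    have hv : (j1 : ℕ) = (j2 : ℕ) := by omega
    exact Fin.ext hv

lemma CT.abs_exp_sub_one_le (s : ℝ) : |Real.exp s - 1| ≤ |s| * Real.exp |s| := by
  have hpos := Real.exp_pos |s|
  have h1 : Real.exp s ≤ Real.exp |s| := Real.exp_le_exp.mpr (le_abs_self s)
  have h2 : Real.exp (-|s|) ≤ Real.exp s := Real.exp_le_exp.mpr (neg_abs_le s)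
  have h3 : 1 - |s| ≤ Real.exp (-|s|) := by
    have := Real.add_one_le_exp (-|s|); linarith
  have h4 : Real.exp |s| - 1 ≤ |s| * Real.exp |s| := by
    have h5 := Real.add_one_le_exp (-|s|)
    have h6 : Real.exp (-|s|) * Real.exp |s| = 1 := by
      rw [← Real.exp_add]; simp
    nlinarith
  have h7 : 1 ≤ Real.exp |s| := Real.one_le_exp (abs_nonneg s)
  rw [abs_le]
  constructor
  · nlinarith
  · nlinarith

lemma CT.core {n : ℕ} (C μ δ ν : ℝ) (hC : 0 < C) (hμ : 0 < μ) (hδ : 0 < δ)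
    (hν1 : 0 < ν) (hν2 : ν ≤ μ/2)
    (hνsmall : C * ν * (2 * (1 - Real.exp (-(μ/2)))⁻¹ ^ 2) ≤ δ/4)
    (H : Matrix (Fin n) (Fin n) ℂ) (hH : H.IsHermitian)
    (hHb : ∀ i j : Fin n, ‖H i j‖ ≤ C * Real.exp (-μ * |(i : ℝ) - (j : ℝ)|))
    (lam : ℂ) (hspec : ∀ z ∈ spectrum ℂ H, δ ≤ dist lam z)
    (θ : ℝ) (hθ : |θ| ≤ ν) :
    ∀ i j : Fin n, ‖(lam • (1 : Matrix (Fin n) (Fin n) ℂ) - H)⁻¹ i j‖ ≤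
      (2/δ) * Real.exp (θ * ((j:ℝ) - (i:ℝ))) := by
  -- the unperturbed resolvent
  have hlam : lam ∉ spectrum ℂ H := by
    intro hmem
    have := hspec lam hmem
    simp at this
    linarith
  have huIs : IsUnit (lam • (1 : Matrix (Fin n) (Fin n) ℂ) - H) := by
    have h := spectrum.notMem_iff.mp hlam
    rwa [Algebra.algebraMap_eq_smul_one] at h
  obtain ⟨u, huc⟩ := huIs
  have huinv : ‖(↑u⁻¹ : Matrix (Fin n) (Fin n) ℂ)‖ ≤ δ⁻¹ :=
    CT.resolvent_norm_bound hH hδ hspec u huc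
  -- the conjugating diagonal matrices
  set D : ℝ → Matrix (Fin n) (Fin n) ℂ :=
    fun τ => Matrix.diagonal (fun k : Fin n => ((Real.exp (τ * (k:ℕ)) : ℝ) : ℂ)) with hD
  have hDD : ∀ τ : ℝ, D τ * D (-τ) = 1 := by
    intro τ
    rw [hD]
    calc Matrix.diagonal (fun k : Fin n => ((Real.exp (τ * (k:ℕ)) : ℝ) : ℂ)) *
        Matrix.diagonal (fun k : Fin n => ((Real.exp (-τ * (k:ℕ)) : ℝ) : ℂ))
        = Matrix.diagonal (fun k : Fin n =>
            ((Real.exp (τ * (k:ℕ)) : ℝ) : ℂ) * ((Real.exp (-τ * (k:ℕ)) : ℝ) : ℂ)) :=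
          Matrix.diagonal_mul_diagonal _ _
      _ = Matrix.diagonal (fun _ : Fin n => (1 : ℂ)) := by
          refine congrArg Matrix.diagonal (funext fun k => ?_)
          rw [← Complex.ofReal_mul, ← Real.exp_add]
          norm_num
      _ = 1 := Matrix.diagonal_one
  -- the perturbation
  set B : Matrix (Fin n) (Fin n) ℂ := D θ * H * D (-θ) - H with hB
  have hBentry : ∀ i j : Fin n, B i j =
      ((Real.exp (θ * ((i:ℝ) - (j:ℝ))) - 1 : ℝ) : ℂ) * H i j := by
    intro i j
    rw [hB]
    simp only [Matrix.sub_apply, Matrix.mul_diagonal, Matrix.diagonal_mul, hD]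
    rw [Complex.ofReal_sub, Complex.ofReal_one]
    have harg : θ * ((i:ℕ):ℝ) + -θ * ((j:ℕ):ℝ) = θ * (((i:ℕ):ℝ) - ((j:ℕ):ℝ)) := by ring
    have hcc : ((Real.exp (θ * (i:ℕ)) : ℝ) : ℂ) * ((Real.exp (-θ * (j:ℕ)) : ℝ) : ℂ)
        = ((Real.exp (θ * ((i:ℝ) - (j:ℝ))) : ℝ) : ℂ) := by
      rw [← Complex.ofReal_mul, ← Real.exp_add, harg]
    have he : ((Real.exp (θ * (i:ℕ)) : ℝ) : ℂ) * H i j * ((Real.exp (-θ * (j:ℕ)) : ℝ) : ℂ)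
        = ((Real.exp (θ * (i:ℕ)) : ℝ) : ℂ) * ((Real.exp (-θ * (j:ℕ)) : ℝ) : ℂ) * H i j := by
      ring
    rw [he, hcc]
    ring
  -- entry bound for B
  set q : ℝ := Real.exp (-(μ/2)) with hq
  have hq0 : 0 < q := Real.exp_pos _
  have hq1 : q < 1 := by
    rw [hq]
    apply Real.exp_lt_one_iff.mpr
    linarith
  have hdist_eq : ∀ i j : Fin n, |(i:ℝ) - (j:ℝ)| = ((((i:ℤ) - (j:ℤ)).natAbs : ℕ) : ℝ) := by
    intro i j
    rw [Nat.cast_natAbs]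
    push_cast
    ring_nf
  have hBb : ∀ i j : Fin n, ‖B i j‖ ≤
      (C * ν) * (((((i:ℤ) - (j:ℤ)).natAbs : ℕ) : ℝ) + 1) * q ^ (((i:ℤ) - (j:ℤ)).natAbs) := by
    intro i j
    set d : ℕ := ((i:ℤ) - (j:ℤ)).natAbs with hdd
    have habs : |(i:ℝ) - (j:ℝ)| = (d : ℝ) := hdist_eq i j
    have hdnn : (0:ℝ) ≤ (d:ℝ) := Nat.cast_nonneg d
    rw [hBentry i j, norm_mul, Complex.norm_real, Real.norm_eq_abs]
    set s : ℝ := θ * ((i:ℝ) - (j:ℝ)) with hs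
    have hsabs : |s| ≤ ν * d := by
      rw [hs, abs_mul, habs]
      exact mul_le_mul_of_nonneg_right hθ hdnn
    have h1 : |Real.exp s - 1| ≤ (ν * d) * Real.exp (ν * d) := by
      refine le_trans (CT.abs_exp_sub_one_le s) ?_
      exact mul_le_mul hsabs (Real.exp_le_exp.mpr hsabs) (le_of_lt (Real.exp_pos _))
        (by positivity)
    have h2 : ‖H i j‖ ≤ C * Real.exp (-μ * (d:ℝ)) := by
      have := hHb i j
      rwa [habs] at this
    calc |Real.exp s - 1| * ‖H i j‖
        ≤ ((ν * d) * Real.exp (ν * d)) * (C * Real.exp (-μ * (d:ℝ))) := by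
          exact mul_le_mul h1 h2 (norm_nonneg _) (by positivity)
      _ = C * ν * (d:ℝ) * Real.exp (ν * d + -μ * d) := by
          rw [Real.exp_add]; ring
      _ ≤ C * ν * (d:ℝ) * Real.exp (-(μ/2) * d) := by
          refine mul_le_mul_of_nonneg_left (Real.exp_le_exp.mpr ?_) (by positivity)
          nlinarith
      _ = C * ν * (d:ℝ) * q ^ d := by
          rw [hq, ← Real.exp_nat_mul]
          ring_nf
      _ ≤ (C * ν) * ((d:ℝ) + 1) * q ^ d := by
          have hqd : (0:ℝ) ≤ C * ν * q ^ d := by positivity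
          nlinarith
  -- Schur bound for B
  have hBnorm : ‖B‖ ≤ δ/4 := by
    refine CT.schur_test B (δ/4) (by positivity) (fun i => ?_) (fun j => ?_)
    · calc ∑ j, ‖B i j‖
          ≤ ∑ j : Fin n, (C * ν) * ((((((i:ℤ) - (j:ℤ)).natAbs : ℕ)) : ℝ) + 1) *
            q ^ (((i:ℤ) - (j:ℤ)).natAbs) := Finset.sum_le_sum fun j _ => hBb i j
        _ = (C * ν) * ∑ j : Fin n, ((((((i:ℤ) - (j:ℤ)).natAbs : ℕ)) : ℝ) + 1) *
            q ^ (((i:ℤ) - (j:ℤ)).natAbs) := by rw [Finset.mul_sum]; congr 1; funext j; ring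
        _ ≤ (C * ν) * (2 * (1 - q)⁻¹ ^ 2) := by
            refine mul_le_mul_of_nonneg_left (CT.row_sum_bound i (le_of_lt hq0) hq1)
              (by positivity)
        _ ≤ δ/4 := hνsmall
    · calc ∑ i, ‖B i j‖
          ≤ ∑ i : Fin n, (C * ν) * ((((((j:ℤ) - (i:ℤ)).natAbs : ℕ)) : ℝ) + 1) *
            q ^ (((j:ℤ) - (i:ℤ)).natAbs) := Finset.sum_le_sum fun i _ => by
              have hsym : ((j:ℤ) - (i:ℤ)).natAbs = ((i:ℤ) - (j:ℤ)).natAbs := by omega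
              rw [hsym]; exact hBb i j
        _ = (C * ν) * ∑ i : Fin n, ((((((j:ℤ) - (i:ℤ)).natAbs : ℕ)) : ℝ) + 1) *
            q ^ (((j:ℤ) - (i:ℤ)).natAbs) := by rw [Finset.mul_sum]; congr 1; funext i; ring
        _ ≤ (C * ν) * (2 * (1 - q)⁻¹ ^ 2) := by
            refine mul_le_mul_of_nonneg_left (CT.row_sum_bound j (le_of_lt hq0) hq1)
              (by positivity)
        _ ≤ δ/4 := hνsmall
  -- the perturbed resolvent
  obtain ⟨w, hwc, hwinv⟩ := CT.perturb_gen (CT.mat_norm_one_le n) u hδ huinv B hBnorm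
  rw [huc] at hwc
  have hDD' : D (-θ) * D θ = 1 := by
    have h := hDD (-θ); rwa [neg_neg] at h
  have hwc2 : (↑w : Matrix (Fin n) (Fin n) ℂ) = lam • 1 - D θ * H * D (-θ) := by
    rw [hwc, hB]; abel
  -- inverse identity
  have hDw : D θ * (lam • 1 - H) = (↑w : Matrix (Fin n) (Fin n) ℂ) * D θ := by
    rw [hwc2, mul_sub, sub_mul, Matrix.mul_smul, mul_one, Matrix.smul_mul, one_mul]
    congr 1
    calc D θ * H = D θ * H * 1 := (mul_one _).symm
      _ = D θ * H * (D (-θ) * D θ) := by rw [hDD']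
      _ = D θ * H * D (-θ) * D θ := by rw [mul_assoc (D θ * H)]
  have hN : (D (-θ) * (↑w⁻¹ : Matrix (Fin n) (Fin n) ℂ) * D θ) * (lam • 1 - H) = 1 := by
    rw [mul_assoc (D (-θ) * (↑w⁻¹ : Matrix (Fin n) (Fin n) ℂ)), hDw,
      ← mul_assoc, mul_assoc (D (-θ)), w.inv_mul, mul_one, hDD']
  have hinv_eq : (lam • (1 : Matrix (Fin n) (Fin n) ℂ) - H)⁻¹ =
      D (-θ) * (↑w⁻¹ : Matrix (Fin n) (Fin n) ℂ) * D θ :=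
    Matrix.inv_eq_left_inv hN
  -- entrywise bound
  intro i j
  rw [hinv_eq]
  have hentry : (D (-θ) * (↑w⁻¹ : Matrix (Fin n) (Fin n) ℂ) * D θ) i j =
      ((Real.exp (-θ * (i:ℕ)) : ℝ) : ℂ) * (↑w⁻¹ : Matrix (Fin n) (Fin n) ℂ) i j *
        ((Real.exp (θ * (j:ℕ)) : ℝ) : ℂ) := by
    rw [hD]
    simp only [Matrix.mul_diagonal, Matrix.diagonal_mul]
  rw [hentry, norm_mul, norm_mul, Complex.norm_real, Complex.norm_real,
    Real.norm_eq_abs, Real.norm_eq_abs, Real.abs_exp, Real.abs_exp]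
  have hwb : ‖(↑w⁻¹ : Matrix (Fin n) (Fin n) ℂ) i j‖ ≤ 2/δ :=
    le_trans (CT.entry_le_norm _ i j) hwinv
  calc Real.exp (-θ * (i:ℕ)) * ‖(↑w⁻¹ : Matrix (Fin n) (Fin n) ℂ) i j‖ *
      Real.exp (θ * (j:ℕ))
      ≤ Real.exp (-θ * (i:ℕ)) * (2/δ) * Real.exp (θ * (j:ℕ)) := by
        refine mul_le_mul_of_nonneg_right (mul_le_mul_of_nonneg_left hwb
          (le_of_lt (Real.exp_pos _))) (le_of_lt (Real.exp_pos _))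
    _ = (2/δ) * Real.exp (θ * ((j:ℝ) - (i:ℝ))) := by
        rw [mul_comm _ (2/δ), mul_assoc, ← Real.exp_add]
        ring_nf

/-- Finite-dimensional Combes–Thomas estimate: for every `C, μ, δ > 0` there
exist `C'` and `ν > 0`, independent of the dimension `n`, such that for every
`n × n` Hermitian matrix `H` with `|H_{ij}| ≤ C e^{−μ|i−j|}` and every `λ ∈ ℂ`
at distance `≥ δ` from the spectrum of `H`, the resolvent `(λ − H)⁻¹` exists
and its entries satisfy `|((λ − H)⁻¹)_{ij}| ≤ C' e^{−ν|i−j|}`. -/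
theorem stmt_14 (C μ δ : ℝ) (hC : 0 < C) (hμ : 0 < μ) (hδ : 0 < δ) :
    ∃ C' ν : ℝ, 0 < ν ∧
      ∀ (n : ℕ) (H : Matrix (Fin n) (Fin n) ℂ), H.IsHermitian →
        (∀ i j : Fin n, ‖H i j‖ ≤ C * Real.exp (-μ * |(i : ℝ) - (j : ℝ)|)) →
        ∀ lam : ℂ, (∀ z ∈ spectrum ℂ H, δ ≤ dist lam z) →
          IsUnit (lam • (1 : Matrix (Fin n) (Fin n) ℂ) - H) ∧
          ∀ i j : Fin n,
            ‖(lam • (1 : Matrix (Fin n) (Fin n) ℂ) - H)⁻¹ i j‖ ≤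
              C' * Real.exp (-ν * |(i : ℝ) - (j : ℝ)|) := by
  have hq0 : 0 < Real.exp (-(μ/2)) := Real.exp_pos _
  have hq1 : Real.exp (-(μ/2)) < 1 := Real.exp_lt_one_iff.mpr (by linarith)
  set K : ℝ := 2 * (1 - Real.exp (-(μ/2)))⁻¹ ^ 2 with hK
  have hKpos : 0 < K := by
    have h1q : 0 < 1 - Real.exp (-(μ/2)) := by linarith
    positivity
  set ν : ℝ := min (μ/2) (δ/(4*C*K)) with hν
  have hν1 : 0 < ν := lt_min (by linarith) (by positivity)
  have hν2 : ν ≤ μ/2 := min_le_left _ _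
  have hν3 : ν ≤ δ/(4*C*K) := min_le_right _ _
  have hνsmall : C * ν * K ≤ δ/4 := by
    have h1 : C * ν * K ≤ C * (δ/(4*C*K)) * K := by
      have := mul_le_mul_of_nonneg_left hν3 (le_of_lt hC)
      exact mul_le_mul_of_nonneg_right this (le_of_lt hKpos)
    have h2 : C * (δ/(4*C*K)) * K = δ/4 := by
      field_simp
    linarith
  refine ⟨2/δ, ν, hν1, ?_⟩
  intro n H hH hHb lam hspec
  have hlam : lam ∉ spectrum ℂ H := by
    intro hmem
    have := hspec lam hmem
    simp at this
    linarith
  have huIs : IsUnit (lam • (1 : Matrix (Fin n) (Fin n) ℂ) - H) := by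
    have h := spectrum.notMem_iff.mp hlam
    rwa [Algebra.algebraMap_eq_smul_one] at h
  refine ⟨huIs, fun i j => ?_⟩
  rcases le_or_gt ((j:ℕ):ℝ) ((i:ℕ):ℝ) with hij | hij
  · have habs : |(i:ℝ) - (j:ℝ)| = (i:ℝ) - (j:ℝ) := abs_of_nonneg (by linarith)
    have hb := CT.core C μ δ ν hC hμ hδ hν1 hν2 hνsmall H hH hHb lam hspec ν
      (by rw [abs_of_pos hν1]) i j
    refine le_trans hb (le_of_eq ?_)
    rw [habs]
    ring_nf
  · have habs : |(i:ℝ) - (j:ℝ)| = -((i:ℝ) - (j:ℝ)) := abs_of_neg (by linarith)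
    have hb := CT.core C μ δ ν hC hμ hδ hν1 hν2 hνsmall H hH hHb lam hspec (-ν)
      (by rw [abs_neg, abs_of_pos hν1]) i j
    refine le_trans hb (le_of_eq ?_)
    rw [habs]
    ring_nf
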